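/- The feasible set of the best-fit precision optimization, {Λ positive semi-definite : Tr(CᵢΛ) ≤ -2 log wᵢ, i = 1,…,N} with Cᵢ = (xᵢ - μ)(xᵢ - μ)ᵀ and wᵢ ∈ (0,1), is a nonempty, convex and compact subset of the symmetric matrices, provided the vectors {xᵢ - μ}_{i=1}^N span ℝⁿ; consequently the maximizer of the continuous objective Λ ↦ log det Λ (with log det Λ = -∞ when Λ is singular) exists. -/

import Mathlib

open Matrix

/-- The feasible set of the best-fit precision optimization problem. -/
def feasiblePrec {n N : ℕ} (w : Fin N → ℝ) (x : Fin N → (Fin n → ℝ)) (μ : Fin n → ℝ) :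
    Set (Matrix (Fin n) (Fin n) ℝ) :=
  {Λ | Λ.PosSemidef ∧ ∀ i, (x i - μ) ⬝ᵥ (Λ *ᵥ (x i - μ)) ≤ -2 * Real.log (w i)}

private lemma cont_quad {n : ℕ} (v u : Fin n → ℝ) :
    Continuous fun Λ : Matrix (Fin n) (Fin n) ℝ => v ⬝ᵥ (Λ *ᵥ u) := by
  simp only [dotProduct, mulVec]
  exact continuous_finset_sum _ fun j _ => continuous_const.mul
    (continuous_finset_sum _ fun k _ =>
      (((continuous_apply k).comp
        (continuous_apply (A := fun _ : Fin n => Fin n → ℝ) j)).mul continuous_const))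

private lemma quad_inner {n : ℕ} (B : Matrix (Fin n) (Fin n) ℝ) (u u' : Fin n → ℝ) :
    u ⬝ᵥ ((Bᴴ * B) *ᵥ u') =
      inner ℝ ((WithLp.equiv 2 (Fin n → ℝ)).symm (B *ᵥ u))
        ((WithLp.equiv 2 (Fin n → ℝ)).symm (B *ᵥ u')) := by
  have h : Bᴴ = Bᵀ := by ext j k; simp [conjTranspose_apply]
  rw [h, ← mulVec_mulVec, dotProduct_mulVec, vecMul_transpose]
  simp [dotProduct, PiLp.inner_apply, RCLike.inner_apply, WithLp.equiv_symm_apply, PiLp.toLp_apply, mul_comm]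

/-- when the displacements span ℝⁿ, the feasible set is nonempty, convex and
compact, so a maximizer of the (log-)determinant objective exists. -/
theorem feasiblePrec_convex_compact_exists_max {n N : ℕ}
    (w : Fin N → ℝ) (x : Fin N → (Fin n → ℝ)) (μ : Fin n → ℝ)
    (hw : ∀ i, 0 < w i ∧ w i < 1)
    (hspan : Submodule.span ℝ (Set.range fun i => x i - μ) = ⊤) :
    (feasiblePrec w x μ).Nonempty ∧ Convex ℝ (feasiblePrec w x μ) ∧
      IsCompact (feasiblePrec w x μ) ∧
      ∃ Λstar ∈ feasiblePrec w x μ, ∀ Λ ∈ feasiblePrec w x μ, Λ.det ≤ Λstar.det := by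
  have hc_pos : ∀ i, 0 ≤ -2 * Real.log (w i) := by
    intro i
    have := Real.log_neg (hw i).1 (hw i).2
    nlinarith
  -- Nonempty
  have hne : (feasiblePrec w x μ).Nonempty := by
    refine ⟨0, Matrix.PosSemidef.zero, fun i => ?_⟩
    simp only [Matrix.zero_mulVec, dotProduct_zero]
    exact hc_pos i
  -- Convex
  have hconv : Convex ℝ (feasiblePrec w x μ) := by
    intro Λ₁ h1 Λ₂ h2 a b ha hb hab
    refine ⟨posSemidef_iff_dotProduct_mulVec.mpr ⟨?_, ?_⟩, fun i => ?_⟩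
    · show (a • Λ₁ + b • Λ₂)ᴴ = a • Λ₁ + b • Λ₂
      have e1 : Λ₁ᵀ = Λ₁ := by have := h1.1.1.eq; simpa using this
      have e2 : Λ₂ᵀ = Λ₂ := by have := h2.1.1.eq; simpa using this
      simp [conjTranspose_add, conjTranspose_smul, e1, e2]
    · intro v
      have q1 := h1.1.dotProduct_mulVec_nonneg v
      have q2 := h2.1.dotProduct_mulVec_nonneg v
      simp only [add_mulVec, smul_mulVec, dotProduct_add, dotProduct_smul,
        smul_eq_mul] at *
      nlinarith
    · have q1 := h1.2 i
      have q2 := h2.2 i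
      simp only [add_mulVec, smul_mulVec, dotProduct_add, dotProduct_smul, smul_eq_mul]
      have h3 : a * (-2 * Real.log (w i)) + b * (-2 * Real.log (w i)) = -2 * Real.log (w i) := by
        rw [← add_mul, hab, one_mul]
      have h4 := mul_le_mul_of_nonneg_left q1 ha
      have h5 := mul_le_mul_of_nonneg_left q2 hb
      linarith
  -- Closed
  have hclosed : IsClosed (feasiblePrec w x μ) := by
    have : feasiblePrec w x μ =
        ({Λ : Matrix (Fin n) (Fin n) ℝ | Λᴴ = Λ} ∩
          ⋂ v : Fin n → ℝ, {Λ | 0 ≤ star v ⬝ᵥ (Λ *ᵥ v)}) ∩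
        ⋂ i, {Λ | (x i - μ) ⬝ᵥ (Λ *ᵥ (x i - μ)) ≤ -2 * Real.log (w i)} := by
      ext Λ
      simp only [feasiblePrec, Set.mem_setOf_eq, Set.mem_inter_iff, Set.mem_iInter,
        Matrix.posSemidef_iff_dotProduct_mulVec, Matrix.IsHermitian]
      try tauto
    rw [this]
    refine IsClosed.inter (IsClosed.inter ?_ (isClosed_iInter fun v => ?_))
      (isClosed_iInter fun i => ?_)
    · exact isClosed_eq (continuous_id.matrix_conjTranspose) continuous_id
    · exact isClosed_le continuous_const (cont_quad _ _)
    · exact isClosed_le (cont_quad _ _) continuous_const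
  -- coefficients expressing basis vectors in terms of the displacements
  have hmem : ∀ j : Fin n, (Pi.single j 1 : Fin n → ℝ) ∈
      Submodule.span ℝ (Set.range fun i => x i - μ) := by
    intro j; rw [hspan]; trivial
  have hexists : ∀ j : Fin n, ∃ c : Fin N → ℝ,
      (∑ i, c i • (x i - μ)) = Pi.single j 1 := by
    intro j
    exact (Submodule.mem_span_range_iff_exists_fun ℝ).mp (hmem j)
  choose a ha using hexists
  set K : Fin n → ℝ := fun j => ∑ i, |a j i| * Real.sqrt (-2 * Real.log (w i)) with hK
  have hKnonneg : ∀ j, 0 ≤ K j := fun j =>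
    Finset.sum_nonneg fun i _ => mul_nonneg (abs_nonneg _) (Real.sqrt_nonneg _)
  set M : ℝ := (∑ j, K j) * (∑ j, K j) with hM
  -- the key entrywise bound
  have hbound : ∀ Λ ∈ feasiblePrec w x μ, ∀ j k, |Λ j k| ≤ M := by
    rintro Λ ⟨hpsd, hcon⟩ j k
    open scoped MatrixOrder in
    obtain ⟨B, rfl⟩ := CStarAlgebra.nonneg_iff_eq_star_mul_self.mp hpsd.nonneg
    rw [star_eq_conjTranspose] at hcon ⊢
    set T : (Fin n → ℝ) → EuclideanSpace ℝ (Fin n) :=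
      fun u => (WithLp.equiv 2 (Fin n → ℝ)).symm (B *ᵥ u) with hT
    have hTadd : ∀ u u', T (u + u') = T u + T u' := by
      intro u u'; simp [hT, mulVec_add]
    have hTsmul : ∀ (c : ℝ) u, T (c • u) = c • T u := by
      intro c u; simp [hT, mulVec_smul]
    have hTnorm : ∀ i : Fin N, ‖T (x i - μ)‖ ≤ Real.sqrt (-2 * Real.log (w i)) := by
      intro i
      have hq : ‖T (x i - μ)‖ ^ 2 = (x i - μ) ⬝ᵥ ((Bᴴ * B) *ᵥ (x i - μ)) := by
        rw [quad_inner]; exact (real_inner_self_eq_norm_sq _).symm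
      have : ‖T (x i - μ)‖ ^ 2 ≤ -2 * Real.log (w i) := hq ▸ hcon i
      calc ‖T (x i - μ)‖ = Real.sqrt (‖T (x i - μ)‖ ^ 2) := by
              rw [Real.sqrt_sq (norm_nonneg _)]
        _ ≤ Real.sqrt (-2 * Real.log (w i)) := Real.sqrt_le_sqrt this
    have hTe : ∀ j : Fin n, ‖T (Pi.single j 1)‖ ≤ K j := by
      intro j
      have hrw : T (Pi.single j 1) = ∑ i, a j i • T (x i - μ) := by
        rw [← ha j]
        induction (Finset.univ : Finset (Fin N)) using Finset.induction with
        | empty => simp [hT, mulVec_zero]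
        | insert _ s hnot t =>
            rw [Finset.sum_insert hnot, Finset.sum_insert hnot, hTadd, hTsmul, t]
      rw [hrw]
      calc ‖∑ i, a j i • T (x i - μ)‖ ≤ ∑ i, ‖a j i • T (x i - μ)‖ := norm_sum_le _ _
        _ = ∑ i, |a j i| * ‖T (x i - μ)‖ := by simp [norm_smul]
        _ ≤ K j := Finset.sum_le_sum fun i _ =>
            mul_le_mul_of_nonneg_left (hTnorm i) (abs_nonneg _)
    have hentry : (Bᴴ * B) j k = inner ℝ (T (Pi.single j 1)) (T (Pi.single k 1)) := by
      rw [← quad_inner]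
      simp [mulVec_single, single_dotProduct]
    have hKle : ∀ j, K j ≤ ∑ j', K j' :=
      fun j => Finset.single_le_sum (fun j' _ => hKnonneg j') (Finset.mem_univ j)
    calc |(Bᴴ * B) j k| ≤ ‖T (Pi.single j 1)‖ * ‖T (Pi.single k 1)‖ := by
          rw [hentry]; exact abs_real_inner_le_norm _ _
      _ ≤ K j * K k := mul_le_mul (hTe j) (hTe k) (norm_nonneg _) (hKnonneg j)
      _ ≤ M := mul_le_mul (hKle j) (hKle k) (hKnonneg k)
          (Finset.sum_nonneg fun j' _ => hKnonneg j')
  -- Compact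
  have hcompact : IsCompact (feasiblePrec w x μ) := by
    have hbox : IsCompact ((Set.univ : Set (Fin n)).pi fun _ =>
        (Set.univ : Set (Fin n)).pi fun _ => Set.Icc (-M) M) :=
      isCompact_univ_pi fun _ => isCompact_univ_pi fun _ => isCompact_Icc
    refine IsCompact.of_isClosed_subset hbox hclosed ?_
    intro Λ hΛ
    refine Set.mem_univ_pi.mpr ?_
    intro j
    rw [Set.mem_univ_pi]
    intro k
    exact abs_le.mp (hbound Λ hΛ j k)
  refine ⟨hne, hconv, hcompact, ?_⟩
  obtain ⟨Λstar, hmem, hmax⟩ := hcompact.exists_isMaxOn hne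
    (Continuous.continuousOn (continuous_id.matrix_det))
  exact ⟨Λstar, hmem, fun Λ hΛ => hmax hΛ⟩
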